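/- Lunar power formula for numbers with weakly decreasing digits: let B ≥ 2 and let a be a natural number with base-B digits a_k, ..., a_1, a_0 (from most significant to least significant) satisfying a_{i+1} ≤ a_i for all i. Then for every n ≥ 1, the n-th lunar power of a (the n-fold lunar product a ⊗ a ⊗ ... ⊗ a) is the number whose base-B digit sequence, from most significant to least significant, consists of a_k repeated n times, then a_{k-1} repeated n times, ..., then a_1 repeated n times, then a_0 once. -/

import Mathlib

/-- The `d`-th base-`B` digit of `n` (position 0 is the least significant digit). -/
def lunarDigit (B n d : ℕ) : ℕ := n / B ^ d % B

/-- Base-`B` lunar addition: the `d`-th digit of `x ⊕ y` is the maximum of the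
`d`-th digits of `x` and `y` (no carries). -/
def lunarAdd (B x y : ℕ) : ℕ :=
  ∑ d ∈ Finset.range (x + y + 1), max (lunarDigit B x d) (lunarDigit B y d) * B ^ d

/-- Base-`B` lunar multiplication: the `d`-th digit of `x ⊗ y` is the maximum over
`j + k = d` of the minimum of the `j`-th digit of `x` and the `k`-th digit of `y`. -/
def lunarMul (B x y : ℕ) : ℕ :=
  ∑ d ∈ Finset.range (x + y + 1),
    ((Finset.range (d + 1)).sup fun j => min (lunarDigit B x j) (lunarDigit B y (d - j))) * B ^ d

/-- `M` is a 3×3 base-`B` lunar magic square with total `T`: the lunar sums of the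
three rows, the three columns, and the two diagonals all equal `T`. -/
def IsLunarMagic (B : ℕ) (M : Fin 3 → Fin 3 → ℕ) (T : ℕ) : Prop :=
  (∀ i, lunarAdd B (lunarAdd B (M i 0) (M i 1)) (M i 2) = T) ∧
  (∀ j, lunarAdd B (lunarAdd B (M 0 j) (M 1 j)) (M 2 j) = T) ∧
  lunarAdd B (lunarAdd B (M 0 0) (M 1 1)) (M 2 2) = T ∧
  lunarAdd B (lunarAdd B (M 0 2) (M 1 1)) (M 2 0) = T

/-- The nine entries of `M` are pairwise distinct. -/
def DistinctEntries (M : Fin 3 → Fin 3 → ℕ) : Prop :=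
  ∀ i j i' j', M i j = M i' j' → i = i' ∧ j = j'

/-- The `n`-th base-`B` lunar power of `a` (so `lunarPow B a 1 = a`, and
`lunarPow B a 0` is the lunar multiplicative identity `B - 1`). -/
def lunarPow (B a : ℕ) : ℕ → ℕ
  | 0 => B - 1
  | 1 => a
  | n + 2 => lunarMul B a (lunarPow B a (n + 1))

/-!
Write `a_i` for the digits of `a` and `⌈m/n⌉ = (m + n - 1) / n`. Inductively, digit `m` of
`a ⊗ a^n` is the maximum over `j ≤ m` of `min a_j a_⌈(m-j)/n⌉`. As the digits decrease, this
is `a_k` for `k` the minimum over `j ≤ m` of `max j ⌈(m-j)/n⌉`, and that minimum is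
`⌈m/(n+1)⌉`, attained at `j = ⌈m/(n+1)⌉`.
-/

open Finset

lemma lunarDigit_lt {B : ℕ} (hB : 0 < B) (n d : ℕ) : lunarDigit B n d < B :=
  Nat.mod_lt _ hB

lemma lunarDigit_of_le {B n d : ℕ} (hB : 2 ≤ B) (h : n ≤ d) : lunarDigit B n d = 0 := by
  rw [lunarDigit, Nat.div_eq_of_lt (h.trans_lt (Nat.lt_pow_self hB)), Nat.zero_mod]

lemma lunarDigit_succ (B n d : ℕ) : lunarDigit B n (d + 1) = lunarDigit B (n / B) d := by
  rw [lunarDigit, lunarDigit, pow_succ', Nat.div_div_eq_div_mul]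

lemma sum_range_succ_mul_pow (B N : ℕ) (f : ℕ → ℕ) :
    ∑ d ∈ range (N + 1), f d * B ^ d = f 0 + B * ∑ d ∈ range N, f (d + 1) * B ^ d := by
  rw [sum_range_succ', add_comm, mul_sum]
  simp only [pow_succ', pow_zero, mul_one, mul_left_comm]

lemma lunarDigit_sum_mul_pow {B : ℕ} (m N : ℕ) (f : ℕ → ℕ) (hf : ∀ d, f d < B) :
    lunarDigit B (∑ d ∈ range N, f d * B ^ d) m = if m < N then f m else 0 := by
  have hB : 0 < B := (hf 0).trans_le' (Nat.zero_le _)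
  induction m generalizing N f with
  | zero =>
    cases N with
    | zero => simp [lunarDigit]
    | succ N =>
      simp [lunarDigit, sum_range_succ_mul_pow, Nat.add_mul_mod_self_left, Nat.mod_eq_of_lt (hf 0)]
  | succ m ih =>
    cases N with
    | zero => simp [lunarDigit]
    | succ N =>
      rw [lunarDigit_succ, sum_range_succ_mul_pow, Nat.add_mul_div_left _ _ hB,
        Nat.div_eq_of_lt (hf 0), zero_add, ih N _ fun d => hf (d + 1)]
      simp

lemma lunarDigit_lunarMul {B : ℕ} (hB : 2 ≤ B) (x y m : ℕ) :
    lunarDigit B (lunarMul B x y) m =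
      (range (m + 1)).sup fun j => min (lunarDigit B x j) (lunarDigit B y (m - j)) := by
  rw [lunarMul, lunarDigit_sum_mul_pow]
  · split_ifs with hm
    · rfl
    · refine (Nat.le_zero.1 (Finset.sup_le fun j _ => ?_)).symm
      rcases le_or_gt x j with hx | hx
      · simp [lunarDigit_of_le hB hx]
      · simp [lunarDigit_of_le hB (show y ≤ m - j by omega)]
  · intro d
    refine (Finset.sup_lt_iff (by rw [Nat.bot_eq_zero]; omega)).2 fun j _ => ?_
    exact (min_le_left _ _).trans_lt (lunarDigit_lt (by omega) _ _)

lemma lunarPow_succ (B a : ℕ) {n : ℕ} (hn : 1 ≤ n) :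
    lunarPow B a (n + 1) = lunarMul B a (lunarPow B a n) := by
  obtain ⟨k, rfl⟩ := Nat.exists_eq_add_of_le' hn
  rfl

lemma Antitone.sup_range_min_eq {α : Type*} [LinearOrder α] [OrderBot α] {f : ℕ → α}
    (hf : Antitone f) (g : ℕ → ℕ) {m q : ℕ} (hqm : q ≤ m) (hgq : g q ≤ q)
    (hq : ∀ j ≤ m, q ≤ max j (g j)) :
    ((range (m + 1)).sup fun j => min (f j) (f (g j))) = f q := by
  simp_rw [← hf.map_max]
  refine le_antisymm (Finset.sup_le fun j hj => hf (hq j (Nat.lt_succ_iff.1 (mem_range.1 hj)))) ?_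
  calc f q = f (max q (g q)) := by rw [max_eq_left hgq]
    _ ≤ _ := Finset.le_sup (f := fun j => f (max j (g j))) (mem_range.2 (by omega))

section CeilDiv

variable {m n : ℕ}

lemma ceilDiv_succ_le_max (hn : 1 ≤ n) (j : ℕ) :
    (m + n) / (n + 1) ≤ max j ((m - j + n - 1) / n) := by
  set q := (m + n) / (n + 1)
  have hq : q * (n + 1) ≤ m + n := Nat.div_mul_le_self _ _
  rcases le_or_gt q j with hj | hj
  · exact le_max_of_le_left hj
  · refine le_max_of_le_right ((Nat.le_div_iff_mul_le hn).2 ?_)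
    have : q * n + q ≤ m + n := by linarith
    omega

lemma ceilDiv_succ_le_self : (m + n) / (n + 1) ≤ m :=
  Nat.lt_succ_iff.1 ((Nat.div_lt_iff_lt_mul (Nat.succ_pos n)).2 (by nlinarith))

lemma ceilDiv_sub_ceilDiv_succ_le :
    (m - (m + n) / (n + 1) + n - 1) / n ≤ (m + n) / (n + 1) := by
  set q := (m + n) / (n + 1)
  have hqm : q ≤ m := ceilDiv_succ_le_self
  have hq : m + n < (n + 1) * (q + 1) := Nat.lt_mul_div_succ _ (Nat.succ_pos n)
  rcases Nat.eq_zero_or_pos n with rfl | hn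
  · simp
  refine Nat.le_of_lt_succ ((Nat.div_lt_iff_lt_mul hn).2 ?_)
  have : m ≤ q * n + q := by nlinarith
  rw [Nat.succ_mul]
  generalize q * n = t at *
  omega

end CeilDiv

theorem stmt_12 (B a n : ℕ) (hB : 2 ≤ B) (hn : 1 ≤ n)
    (ha : ∀ i, lunarDigit B a (i + 1) ≤ lunarDigit B a i) :
    ∀ m, lunarDigit B (lunarPow B a n) m = lunarDigit B a ((m + n - 1) / n) := by
  have hA : Antitone (lunarDigit B a) := antitone_nat_of_succ_le ha
  induction n, hn using Nat.le_induction with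
  | base => simp [lunarPow]
  | succ n hn ih =>
    intro m
    rw [lunarPow_succ B a hn, lunarDigit_lunarMul hB]
    simp_rw [ih]
    rw [show m + (n + 1) - 1 = m + n by omega]
    exact hA.sup_range_min_eq _ ceilDiv_succ_le_self ceilDiv_sub_ceilDiv_succ_le
      fun j _ => ceilDiv_succ_le_max hn j
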